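/- Let m ≥ 1, let O ⊆ ℝ^m be a nonempty open convex set, let f : O → ℝ be convex, and let X ⊆ O be a nonempty compact convex set. Suppose (f_t)_{t∈T} is a lower-C² representation of f on an open set O' with X ⊆ O' ⊆ O, and let K_f ≥ 0 be such that for every t ∈ T the gradient ∇f_t is K_f-Lipschitz on X. Let Y = (y₀, y₁, ..., y_m) be a poised tuple of points with y₀ ∈ X, set Δ = max_{1≤i≤m} ‖y_i − y₀‖, and suppose the closed ball B(y₀; Δ) is contained in X. Let y ∈ B(y₀; Δ), let r ≥ 1, let t₁, ..., t_r ∈ A(y) (the active set of the representation at y), let λ ∈ ℝ^r with λ_i ∈ [0,1] and Σ_{i=1}^r λ_i = 1, for each i let F_{t_i} be the linear interpolation model of f_{t_i} over Y, and set V = Σ_{i=1}^r λ_i ∇F_{t_i}(y). Then there exists v ∈ ∂f(y) such that ‖V − v‖ ≤ K_f·(1 + √m·‖L̂⁻¹‖/2)·Δ. -/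

import Mathlib

/-!
Each active `f_{t_i}` is a differentiable minorant of the convex `f` touching it at `y`, so its
gradient is a subgradient; `∂f(y)` is convex, so the convex combination `v` of these gradients
is one too. For the error, interpolation gives `⟪∇F_t, y_j - y₀⟫ = f_t(y_j) - f_t(y₀)`, which
the second-order Taylor bound for a `K`-Lipschitz gradient compares with
`⟪∇f_t(y₀), y_j - y₀⟫` up to `KΔ²/2`. Hence every coordinate of `L(∇F_t - ∇f_t(y₀))` is at most
`KΔ²/2`, so `‖∇F_t - ∇f_t(y₀)‖ ≤ ‖L⁻¹‖ √m KΔ²/2 = ‖L̂⁻¹‖ √m KΔ/2`, and moving from `y₀` to `y`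
costs another `KΔ`. The bound survives averaging over the active indices.
-/

open scoped RealInnerProductSpace

/-- The subdifferential of `f : O → ℝ` at `x`:
`∂f(x) = {v : f(y) ≥ f(x) + ⟪v, y - x⟫ for all y ∈ O}`. -/
def subdiff {m : ℕ} (O : Set (EuclideanSpace ℝ (Fin m)))
    (f : EuclideanSpace ℝ (Fin m) → ℝ) (x : EuclideanSpace ℝ (Fin m)) :
    Set (EuclideanSpace ℝ (Fin m)) :=
  {v | ∀ y ∈ O, f x + ⟪v, y - x⟫ ≤ f y}

/-- `(ft t)_{t ∈ T}` is a lower-C² representation of `f` on the set `V`: each `ft t`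
is C² on `V`, the values, gradients and Hessians depend continuously on
`(t, x) ∈ T × V`, and `f = max_{t ∈ T} ft t` on `V` (the maximum being attained). -/
def IsLowerC2Rep {m : ℕ} (T : Type) [TopologicalSpace T]
    (f : EuclideanSpace ℝ (Fin m) → ℝ)
    (ft : T → EuclideanSpace ℝ (Fin m) → ℝ)
    (V : Set (EuclideanSpace ℝ (Fin m))) : Prop :=
  (∀ t : T, ContDiffOn ℝ 2 (ft t) V) ∧
  ContinuousOn (fun p : T × EuclideanSpace ℝ (Fin m) => ft p.1 p.2)
    (Set.univ ×ˢ V) ∧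
  ContinuousOn (fun p : T × EuclideanSpace ℝ (Fin m) => gradient (ft p.1) p.2)
    (Set.univ ×ˢ V) ∧
  ContinuousOn
    (fun p : T × EuclideanSpace ℝ (Fin m) => fderiv ℝ (gradient (ft p.1)) p.2)
    (Set.univ ×ˢ V) ∧
  (∀ x ∈ V, (∀ t : T, ft t x ≤ f x) ∧ (∃ t : T, ft t x = f x))

/-- A tuple `Y = (y₀, …, y_m)` of points of `ℝ^m` is poised if the `(m+1)×(m+1)` matrix
whose `i`-th row is `(1, yᵢ)` is invertible. -/
def Poised {m : ℕ} (Y : Fin (m + 1) → EuclideanSpace ℝ (Fin m)) : Prop :=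
  (Matrix.of fun i : Fin (m + 1) => Fin.cons (1 : ℝ) (fun j : Fin m => Y i j)).det ≠ 0

/-- The spectral norm of a square real matrix, i.e. the operator norm of the induced
map on Euclidean space. -/
noncomputable def specNorm {n : ℕ} (M : Matrix (Fin n) (Fin n) ℝ) : ℝ :=
  ‖(Matrix.toEuclideanCLM (𝕜 := ℝ) M :
      EuclideanSpace ℝ (Fin n) →L[ℝ] EuclideanSpace ℝ (Fin n))‖

/-- The matrix `L(Y)` whose `i`-th row is `yᵢ - y₀`, for `i = 1, …, m`. -/
noncomputable def Lmat {m : ℕ} (Y : Fin (m + 1) → EuclideanSpace ℝ (Fin m)) :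
    Matrix (Fin m) (Fin m) ℝ :=
  Matrix.of fun i j : Fin m => (Y i.succ - Y 0) j

open Filter Topology

theorem ConvexOn.add_fderiv_sub_le_of_eventuallyLE {E : Type*} [NormedAddCommGroup E]
    [NormedSpace ℝ E] {O : Set E} {f φ : E → ℝ} {φ' : E →L[ℝ] ℝ} {y z : E}
    (hf : ConvexOn ℝ O f) (hy : y ∈ O) (hz : z ∈ O) (hφ : HasFDerivAt φ φ' y)
    (hle : φ ≤ᶠ[𝓝 y] f) (heq : φ y = f y) :
    f y + φ' (z - y) ≤ f z := by
  set k : ℝ → ℝ := fun s => φ (y + s • (z - y)) - s * (f z - f y)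
  have hline : HasDerivAt (fun s : ℝ => y + s • (z - y)) (z - y) 0 := by
    simpa using ((hasDerivAt_id (0 : ℝ)).smul_const (z - y)).const_add y
  have hk : HasDerivAt k (φ' (z - y) - (f z - f y)) 0 := by
    have hφ0 : HasFDerivAt φ φ' (y + (0 : ℝ) • (z - y)) := by simpa using hφ
    exact ((hφ0.comp_hasDerivAt 0 hline).sub
      ((hasDerivAt_id (0 : ℝ)).mul_const (f z - f y))).congr_deriv (by simp)
  -- On `[0, 1]` the chord of `f` dominates `φ` near `0`, so `k` is locally maximal at `0`.
  have hmax : IsLocalMaxOn k (Set.Icc 0 1) 0 := by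
    have hnear : ∀ᶠ s in 𝓝 (0 : ℝ), φ (y + s • (z - y)) ≤ f (y + s • (z - y)) :=
      hline.continuousAt.tendsto.eventually (by rw [zero_smul, add_zero]; exact hle)
    filter_upwards [nhdsWithin_le_nhds hnear, self_mem_nhdsWithin] with s hs ⟨hs0, hs1⟩
    have hconv := hf.2 hy hz (sub_nonneg.2 hs1) hs0 (sub_add_cancel 1 s)
    rw [show (1 - s) • y + s • z = y + s • (z - y) by module] at hconv
    simp only [k, zero_smul, add_zero, zero_mul, sub_zero, heq, smul_eq_mul] at hs hconv ⊢
    linarith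
  have hdir : (1 : ℝ) ∈ posTangentConeAt (Set.Icc (0 : ℝ) 1) 0 :=
    mem_posTangentConeAt_of_segment_subset (by simp [segment_eq_Icc])
  have := hmax.hasFDerivWithinAt_nonpos hk.hasFDerivAt.hasFDerivWithinAt hdir
  rw [ContinuousLinearMap.toSpanSingleton_apply, one_smul] at this
  linarith

theorem convex_subdiff {m : ℕ} (O : Set (EuclideanSpace ℝ (Fin m)))
    (f : EuclideanSpace ℝ (Fin m) → ℝ) (x : EuclideanSpace ℝ (Fin m)) :
    Convex ℝ (subdiff O f x) := by
  intro v hv w hw a b ha hb hab z hz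
  have hcomb := add_le_add (mul_le_mul_of_nonneg_left (hv z hz) ha)
    (mul_le_mul_of_nonneg_left (hw z hz) hb)
  have hsplit : ∀ r : ℝ, r = a * r + b * r := fun r => by rw [← add_mul, hab, one_mul]
  rw [inner_add_left, real_inner_smul_left, real_inner_smul_left, hsplit (f x), hsplit (f z)]
  linarith

theorem gradient_mem_subdiff_of_eventuallyLE {m : ℕ} {O : Set (EuclideanSpace ℝ (Fin m))}
    {f φ : EuclideanSpace ℝ (Fin m) → ℝ} {y : EuclideanSpace ℝ (Fin m)}
    (hf : ConvexOn ℝ O f) (hy : y ∈ O) (hφ : DifferentiableAt ℝ φ y)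
    (hle : φ ≤ᶠ[𝓝 y] f) (heq : φ y = f y) :
    gradient φ y ∈ subdiff O f y := fun z hz => by
  simpa [inner_gradient_left] using hf.add_fderiv_sub_le_of_eventuallyLE hy hz
    hφ.hasFDerivAt hle heq

theorem hasGradientAt_const_add_inner {E : Type*} [NormedAddCommGroup E]
    [InnerProductSpace ℝ E] [CompleteSpace E] (c : ℝ) (a x : E) :
    HasGradientAt (fun z => c + ⟪a, z⟫) a x := by
  rw [hasGradientAt_iff_hasFDerivAt]
  simpa using ((InnerProductSpace.toDual ℝ E a).hasFDerivAt (x := x)).const_add c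

theorem abs_sub_sub_inner_gradient_le {E : Type*} [NormedAddCommGroup E]
    [InnerProductSpace ℝ E] [CompleteSpace E] {g : E → ℝ} {a b : E} {K : ℝ}
    (hg : ∀ x ∈ segment ℝ a b, DifferentiableAt ℝ g x)
    (hlip : ∀ x ∈ segment ℝ a b, ‖gradient g x - gradient g a‖ ≤ K * ‖x - a‖) :
    |g b - g a - ⟪gradient g a, b - a⟫| ≤ K / 2 * ‖b - a‖ ^ 2 := by
  set d := b - a
  have hseg : ∀ s ∈ Set.Icc (0 : ℝ) 1, a + s • d ∈ segment ℝ a b := fun s hs => by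
    rw [segment_eq_image']; exact ⟨s, hs, rfl⟩
  set h : ℝ → ℝ := fun s => g (a + s • d) - s * ⟪gradient g a, d⟫
  have hderiv : ∀ s ∈ Set.Icc (0 : ℝ) 1,
      HasDerivAt h ⟪gradient g (a + s • d) - gradient g a, d⟫ s := by
    intro s hs
    have hline : HasDerivAt (fun s : ℝ => a + s • d) d s := by
      simpa using ((hasDerivAt_id s).smul_const d).const_add a
    have hcomp := ((hg _ (hseg s hs)).hasGradientAt.hasFDerivAt).comp_hasDerivAt s hline
    exact (hcomp.sub ((hasDerivAt_id s).mul_const ⟪gradient g a, d⟫)).congr_deriv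
      (by simp [inner_sub_left])
  -- Compare `h - h 0` with `C s ^ 2`, whose derivative `2 C s` dominates `|h'(s)| ≤ K s ‖d‖ ^ 2`.
  set C := K / 2 * ‖d‖ ^ 2
  have hbound : ∀ s ∈ Set.Ico (0 : ℝ) 1,
      ‖⟪gradient g (a + s • d) - gradient g a, d⟫‖ ≤ C * (2 * s) := by
    intro s hs
    have hlip_s := hlip _ (hseg s (Set.mem_Icc_of_Ico hs))
    rw [add_sub_cancel_left, norm_smul, Real.norm_of_nonneg hs.1] at hlip_s
    calc ‖⟪gradient g (a + s • d) - gradient g a, d⟫‖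
        ≤ ‖gradient g (a + s • d) - gradient g a‖ * ‖d‖ := norm_inner_le_norm _ _
      _ ≤ K * (s * ‖d‖) * ‖d‖ := by gcongr
      _ = C * (2 * s) := by ring
  have hcomp := image_norm_le_of_norm_deriv_right_le_deriv_boundary (a := 0) (b := 1)
    (f := fun s => h s - h 0) (B := fun s => C * s ^ 2)
    (fun s hs => ((hderiv s hs).continuousAt.sub continuousAt_const).continuousWithinAt)
    (fun s hs => ((hderiv s (Set.mem_Icc_of_Ico hs)).sub_const (h 0)).hasDerivWithinAt)
    (by simp) (fun s => by simpa using (hasDerivAt_pow 2 s).const_mul C) hbound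
    (Set.right_mem_Icc.2 zero_le_one)
  simpa [h, d, Real.norm_eq_abs, sub_sub, add_comm] using hcomp

theorem Poised.det_Lmat_ne_zero {m : ℕ} {Y : Fin (m + 1) → EuclideanSpace ℝ (Fin m)}
    (hY : Poised Y) : (Lmat Y).det ≠ 0 := by
  -- Subtracting row `0` from the others leaves first column `e₀` and lower-right block `L(Y)`.
  set B : Matrix (Fin (m + 1)) (Fin (m + 1)) ℝ :=
    Matrix.of (Fin.cons (Fin.cons 1 fun j => Y 0 j) fun i => Fin.cons 0 fun j => (Y i.succ - Y 0) j)
  have hrow : (Matrix.of fun i : Fin (m + 1) => Fin.cons (1 : ℝ) (fun j : Fin m => Y i j)).det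
      = B.det := by
    refine Matrix.det_eq_of_forall_row_eq_smul_add_const (Fin.cons 0 fun _ => 1) 0 rfl ?_
    intro i j
    cases i using Fin.cases <;> cases j using Fin.cases <;> simp [B]
  have hB : B.det = (Lmat Y).det := by
    rw [Matrix.det_succ_column_zero, Fin.sum_univ_succ]
    simp [B, Lmat, Matrix.submatrix]
  rwa [← hB, ← hrow]

theorem Poised.pos_of_isGreatest {m : ℕ} {Y : Fin (m + 1) → EuclideanSpace ℝ (Fin m)}
    (hY : Poised Y) {Δ : ℝ} (hΔ : IsGreatest (Set.range fun i : Fin m => ‖Y i.succ - Y 0‖) Δ) :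
    0 < Δ := by
  obtain ⟨i, rfl⟩ := hΔ.1
  refine norm_pos_iff.2 fun hi => hY.det_Lmat_ne_zero (Matrix.det_eq_zero_of_row_eq_zero i ?_)
  intro j
  simp only [Lmat, Matrix.of_apply, hi]
  rfl

theorem Lmat_toEuclideanCLM_apply {m : ℕ} (Y : Fin (m + 1) → EuclideanSpace ℝ (Fin m))
    (w : EuclideanSpace ℝ (Fin m)) (i : Fin m) :
    Matrix.toEuclideanCLM (𝕜 := ℝ) (Lmat Y) w i = ⟪w, Y i.succ - Y 0⟫ := by
  simp [Matrix.ofLp_toEuclideanCLM, Matrix.mulVec, dotProduct, Lmat, PiLp.inner_apply, mul_comm]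

theorem norm_le_specNorm_inv_mul {n : ℕ} {M : Matrix (Fin n) (Fin n) ℝ} (hM : IsUnit M.det)
    (w : EuclideanSpace ℝ (Fin n)) :
    ‖w‖ ≤ specNorm M⁻¹ * ‖Matrix.toEuclideanCLM (𝕜 := ℝ) M w‖ := by
  have hinv : Matrix.toEuclideanCLM (𝕜 := ℝ) M⁻¹ (Matrix.toEuclideanCLM (𝕜 := ℝ) M w) = w := by
    rw [← mul_apply_eq_comp, ← map_mul, Matrix.nonsing_inv_mul M hM, map_one,
      one_apply_eq_self]
  conv_lhs => rw [← hinv]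
  exact ContinuousLinearMap.le_opNorm _ _

theorem specNorm_inv_inv_smul {n : ℕ} {M : Matrix (Fin n) (Fin n) ℝ} (hM : IsUnit M.det)
    {c : ℝ} (hc : 0 < c) : specNorm (c⁻¹ • M)⁻¹ = c * specNorm M⁻¹ := by
  have : Invertible c⁻¹ := invertibleOfNonzero (inv_ne_zero hc.ne')
  rw [specNorm, Matrix.inv_smul (A := M) c⁻¹ hM, invOf_eq_inv, inv_inv, map_smul, norm_smul,
    Real.norm_of_nonneg hc.le, specNorm]

theorem EuclideanSpace.norm_le_sqrt_card_mul {n : ℕ} {u : EuclideanSpace ℝ (Fin n)} {c : ℝ}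
    (hc : 0 ≤ c) (hu : ∀ j, |u j| ≤ c) : ‖u‖ ≤ √n * c := by
  rw [EuclideanSpace.norm_eq, ← Real.sqrt_sq hc, ← Real.sqrt_mul (Nat.cast_nonneg n)]
  gcongr
  calc ∑ j, ‖u j‖ ^ 2 ≤ ∑ _j : Fin n, c ^ 2 := by
        gcongr with j
        rw [Real.norm_eq_abs]
        exact hu j
    _ = n * c ^ 2 := by simp

section Interpolation

open Metric

variable {m : ℕ} {Y : Fin (m + 1) → EuclideanSpace ℝ (Fin m)} {Δ K : ℝ}
  {g : EuclideanSpace ℝ (Fin m) → ℝ} {a : EuclideanSpace ℝ (Fin m)}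

theorem norm_interp_sub_gradient_base_le (hY : Poised Y)
    (hΔ : IsGreatest (Set.range fun i : Fin m => ‖Y i.succ - Y 0‖) Δ) (hK : 0 ≤ K)
    (hg : ∀ x ∈ closedBall (Y 0) Δ, DifferentiableAt ℝ g x)
    (hlip : ∀ x ∈ closedBall (Y 0) Δ, ∀ z ∈ closedBall (Y 0) Δ,
      ‖gradient g x - gradient g z‖ ≤ K * ‖x - z‖)
    (ha : ∀ j : Fin m, ⟪a, Y j.succ - Y 0⟫ = g (Y j.succ) - g (Y 0)) :
    ‖a - gradient g (Y 0)‖ ≤ specNorm (Lmat Y)⁻¹ * (√m * (K / 2 * Δ ^ 2)) := by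
  have hΔ0 : 0 ≤ Δ := (hY.pos_of_isGreatest hΔ).le
  have hcenter : Y 0 ∈ closedBall (Y 0) Δ := mem_closedBall_self hΔ0
  have hcoord : ∀ j : Fin m, |⟪a - gradient g (Y 0), Y j.succ - Y 0⟫| ≤ K / 2 * Δ ^ 2 := by
    intro j
    have hj : ‖Y j.succ - Y 0‖ ≤ Δ := hΔ.2 ⟨j, rfl⟩
    have hseg : segment ℝ (Y 0) (Y j.succ) ⊆ closedBall (Y 0) Δ :=
      (convex_closedBall _ _).segment_subset hcenter (mem_closedBall_iff_norm.2 hj)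
    rw [inner_sub_left, ha j]
    calc _ ≤ K / 2 * ‖Y j.succ - Y 0‖ ^ 2 :=
          abs_sub_sub_inner_gradient_le (fun x hx => hg x (hseg hx))
            fun x hx => hlip x (hseg hx) _ hcenter
      _ ≤ K / 2 * Δ ^ 2 := by gcongr
  calc ‖a - gradient g (Y 0)‖
      ≤ specNorm (Lmat Y)⁻¹ * ‖Matrix.toEuclideanCLM (𝕜 := ℝ) (Lmat Y) (a - gradient g (Y 0))‖ :=
        norm_le_specNorm_inv_mul (isUnit_iff_ne_zero.2 hY.det_Lmat_ne_zero) _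
    _ ≤ specNorm (Lmat Y)⁻¹ * (√m * (K / 2 * Δ ^ 2)) := by
        refine mul_le_mul_of_nonneg_left ?_ (norm_nonneg _)
        refine EuclideanSpace.norm_le_sqrt_card_mul (by positivity) fun j => ?_
        rw [Lmat_toEuclideanCLM_apply]
        exact hcoord j

theorem norm_interp_sub_gradient_le (hY : Poised Y)
    (hΔ : IsGreatest (Set.range fun i : Fin m => ‖Y i.succ - Y 0‖) Δ) (hK : 0 ≤ K)
    (hg : ∀ x ∈ closedBall (Y 0) Δ, DifferentiableAt ℝ g x)
    (hlip : ∀ x ∈ closedBall (Y 0) Δ, ∀ z ∈ closedBall (Y 0) Δ,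
      ‖gradient g x - gradient g z‖ ≤ K * ‖x - z‖)
    (ha : ∀ j : Fin m, ⟪a, Y j.succ - Y 0⟫ = g (Y j.succ) - g (Y 0))
    {y : EuclideanSpace ℝ (Fin m)} (hy : y ∈ closedBall (Y 0) Δ) :
    ‖a - gradient g y‖ ≤ K * (1 + √m * specNorm (Δ⁻¹ • Lmat Y)⁻¹ / 2) * Δ := by
  have hΔpos := hY.pos_of_isGreatest hΔ
  have hbase := norm_interp_sub_gradient_base_le hY hΔ hK hg hlip ha
  have hshift : ‖gradient g (Y 0) - gradient g y‖ ≤ K * Δ :=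
    (hlip _ (mem_closedBall_self hΔpos.le) _ hy).trans
      (mul_le_mul_of_nonneg_left (by rwa [← dist_eq_norm, dist_comm]) hK)
  rw [specNorm_inv_inv_smul (isUnit_iff_ne_zero.2 hY.det_Lmat_ne_zero) hΔpos]
  calc ‖a - gradient g y‖ ≤ ‖a - gradient g (Y 0)‖ + ‖gradient g (Y 0) - gradient g y‖ :=
        norm_sub_le_norm_sub_add_norm_sub _ _ _
    _ ≤ specNorm (Lmat Y)⁻¹ * (√m * (K / 2 * Δ ^ 2)) + K * Δ := add_le_add hbase hshift
    _ = K * (1 + √m * (Δ * specNorm (Lmat Y)⁻¹) / 2) * Δ := by ring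

end Interpolation

theorem approximate_subgradient_error_bound_general {m : ℕ} (O : Set (EuclideanSpace ℝ (Fin m)))
    (f : EuclideanSpace ℝ (Fin m) → ℝ) (hf : ConvexOn ℝ O f)
    (X : Set (EuclideanSpace ℝ (Fin m)))
    (O' : Set (EuclideanSpace ℝ (Fin m))) (hO'open : IsOpen O')
    (hXO' : X ⊆ O') (hO'O : O' ⊆ O)
    (T : Type) [TopologicalSpace T]
    (ft : T → EuclideanSpace ℝ (Fin m) → ℝ)
    (hrep : IsLowerC2Rep T f ft O')
    (Kf : ℝ) (hKf0 : 0 ≤ Kf)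
    (hLip : ∀ t : T, ∀ x ∈ X, ∀ y ∈ X,
      ‖gradient (ft t) x - gradient (ft t) y‖ ≤ Kf * ‖x - y‖)
    (Y : Fin (m + 1) → EuclideanSpace ℝ (Fin m))
    (hpoised : Poised Y)
    (Δ : ℝ) (hΔ : IsGreatest (Set.range fun i : Fin m => ‖Y i.succ - Y 0‖) Δ)
    (hball : Metric.closedBall (Y 0) Δ ⊆ X)
    (y : EuclideanSpace ℝ (Fin m)) (hy : y ∈ Metric.closedBall (Y 0) Δ)
    (r : ℕ)
    (ts : Fin r → T) (hts : ∀ i, ft (ts i) y = f y)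
    (lam : Fin r → ℝ) (hlam0 : ∀ i, 0 ≤ lam i)
    (hlamsum : ∑ i, lam i = 1)
    (F : Fin r → EuclideanSpace ℝ (Fin m) → ℝ)
    (hFaff : ∀ i, ∃ (a₀ : ℝ) (a : EuclideanSpace ℝ (Fin m)),
      F i = fun x => a₀ + ⟪a, x⟫)
    (hFinterp : ∀ i, ∀ j, F i (Y j) = ft (ts i) (Y j))
    (V : EuclideanSpace ℝ (Fin m)) (hV : V = ∑ i, lam i • gradient (F i) y) :
    ∃ v ∈ subdiff O f y,
      ‖V - v‖ ≤ Kf * (1 + Real.sqrt (m : ℝ) * specNorm (Δ⁻¹ • Lmat Y)⁻¹ / 2) * Δ := by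
  obtain ⟨hC2, -, -, -, hmax⟩ := hrep
  have hdiff : ∀ t, ∀ x ∈ O', DifferentiableAt ℝ (ft t) x := fun t x hx =>
    ((hC2 t).differentiableOn two_ne_zero).differentiableAt (hO'open.mem_nhds hx)
  have hballO' : Metric.closedBall (Y 0) Δ ⊆ O' := hball.trans hXO'
  have hyO' : y ∈ O' := hballO' hy
  refine ⟨∑ i, lam i • gradient (ft (ts i)) y, ?_, ?_⟩
  · refine (convex_subdiff O f y).sum_mem (fun i _ => hlam0 i) hlamsum fun i _ => ?_
    exact gradient_mem_subdiff_of_eventuallyLE hf (hO'O hyO') (hdiff _ y hyO')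
      (eventually_of_mem (hO'open.mem_nhds hyO') fun x hx => (hmax x hx).1 (ts i)) (hts i)
  · rw [hV, ← Finset.sum_sub_distrib, ← mem_closedBall_zero_iff]
    simp_rw [← smul_sub]
    refine (convex_closedBall _ _).sum_mem (fun i _ => hlam0 i) hlamsum fun i _ => ?_
    obtain ⟨c, a, ha⟩ := hFaff i
    rw [mem_closedBall_zero_iff, ha, (hasGradientAt_const_add_inner c a y).gradient]
    refine norm_interp_sub_gradient_le hpoised hΔ hKf0
      (fun x hx => hdiff _ x (hballO' hx)) (fun x hx z hz => hLip _ x (hball hx) z (hball hz))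
      (fun j => ?_) hy
    rw [← hFinterp i j.succ, ← hFinterp i 0, ha, inner_sub_right]
    ring

theorem approximate_subgradient_error_bound {m : ℕ} (hm : 1 ≤ m)
    (O : Set (EuclideanSpace ℝ (Fin m))) (hOne : O.Nonempty) (hOopen : IsOpen O)
    (hOconv : Convex ℝ O)
    (f : EuclideanSpace ℝ (Fin m) → ℝ) (hf : ConvexOn ℝ O f)
    (X : Set (EuclideanSpace ℝ (Fin m))) (hXne : X.Nonempty) (hXcpt : IsCompact X)
    (hXconv : Convex ℝ X) (hXO : X ⊆ O)
    (O' : Set (EuclideanSpace ℝ (Fin m))) (hO'open : IsOpen O')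
    (hXO' : X ⊆ O') (hO'O : O' ⊆ O)
    (T : Type) [TopologicalSpace T] [CompactSpace T]
    (ft : T → EuclideanSpace ℝ (Fin m) → ℝ)
    (hrep : IsLowerC2Rep T f ft O')
    (Kf : ℝ) (hKf0 : 0 ≤ Kf)
    (hLip : ∀ t : T, ∀ x ∈ X, ∀ y ∈ X,
      ‖gradient (ft t) x - gradient (ft t) y‖ ≤ Kf * ‖x - y‖)
    (Y : Fin (m + 1) → EuclideanSpace ℝ (Fin m)) (hY0 : Y 0 ∈ X)
    (hpoised : Poised Y)
    (Δ : ℝ) (hΔ : IsGreatest (Set.range fun i : Fin m => ‖Y i.succ - Y 0‖) Δ)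
    (hball : Metric.closedBall (Y 0) Δ ⊆ X)
    (y : EuclideanSpace ℝ (Fin m)) (hy : y ∈ Metric.closedBall (Y 0) Δ)
    (r : ℕ) (hr : 1 ≤ r)
    (ts : Fin r → T) (hts : ∀ i, ft (ts i) y = f y)
    (lam : Fin r → ℝ) (hlam0 : ∀ i, 0 ≤ lam i) (hlam1 : ∀ i, lam i ≤ 1)
    (hlamsum : ∑ i, lam i = 1)
    (F : Fin r → EuclideanSpace ℝ (Fin m) → ℝ)
    (hFaff : ∀ i, ∃ (a₀ : ℝ) (a : EuclideanSpace ℝ (Fin m)),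
      F i = fun x => a₀ + ⟪a, x⟫)
    (hFinterp : ∀ i, ∀ j, F i (Y j) = ft (ts i) (Y j))
    (V : EuclideanSpace ℝ (Fin m)) (hV : V = ∑ i, lam i • gradient (F i) y) :
    ∃ v ∈ subdiff O f y,
      ‖V - v‖ ≤ Kf * (1 + Real.sqrt (m : ℝ) * specNorm (Δ⁻¹ • Lmat Y)⁻¹ / 2) * Δ :=
  approximate_subgradient_error_bound_general O f hf X O' hO'open hXO' hO'O T ft hrep Kf hKf0 hLip Y
    hpoised Δ hΔ hball y hy r ts hts lam hlam0 hlamsum F hFaff hFinterp V hV
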